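/- The logarithm map is odd with respect to inversion: for any x ∈ M with x₀² + x₁² = 1, Log_𝟙(x⁻¹) = -Log_𝟙(x), where x⁻¹ = [x₀, -x₁, -x₂, -x₃]ᵀ. -/

import Mathlib

open Real

/-- Four-quadrant arctangent: `arctan2 y x ∈ (-π, π]` is the argument of `x + y i`. -/
noncomputable def arctan2 (y x : ℝ) : ℝ := Complex.arg (Complex.mk x y)

/-- The angle-wrapping function mapping into `(-π/2, π/2]`. -/
noncomputable def wrap (α : ℝ) : ℝ :=
  if α ≤ -(π / 2) then α + π
  else if α > π / 2 then α - π
  else α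

/-- `sinc t = sin t / t`, with `sinc 0 = 1`. -/
noncomputable def sinc (t : ℝ) : ℝ := if t = 0 then 1 else Real.sin t / t

/-- The rotation half-angle of a PUDQ. -/
noncomputable def phi (x : Fin 4 → ℝ) : ℝ := wrap (arctan2 (x 1) (x 0))

/-- The logarithm map at the identity, `Log_𝟙 : M → ℝ³`. -/
noncomputable def Log1 (x : Fin 4 → ℝ) : Fin 3 → ℝ :=
  fun i => (1 / _root_.sinc (phi x)) * ![x 1, x 2, x 3] i

/-- Inverse of a planar unit dual quaternion. -/
noncomputable def pudqInv (x : Fin 4 → ℝ) : Fin 4 → ℝ :=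
  ![x 0, -x 1, -x 2, -x 3]


/-! Negating `x₁` conjugates `x₀ + x₁ i`, which negates its argument except at `π`; `wrap` then
commutes with negation except where `wrap α = π/2`. Either way `phi` changes at most by a sign, and
`sinc` is even. -/

lemma sinc_eq_real_sinc : _root_.sinc = Real.sinc := rfl

lemma wrap_neg_eq_neg_or_eq (α : ℝ) : wrap (-α) = -wrap α ∨ wrap (-α) = wrap α := by
  have hπ := Real.pi_pos
  unfold wrap
  split_ifs <;> first | (left; linarith) | (right; linarith)

lemma phi_pudqInv_eq_neg_or_eq (x : Fin 4 → ℝ) :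
    phi (pudqInv x) = -phi x ∨ phi (pudqInv x) = phi x := by
  have hconj : (⟨x 0, -x 1⟩ : ℂ) = starRingEnd ℂ ⟨x 0, x 1⟩ := by
    simp [Complex.ext_iff]
  simp only [phi, arctan2, pudqInv, Matrix.cons_val_zero, Matrix.cons_val_one]
  rw [hconj, Complex.arg_conj]
  split_ifs with h
  · exact .inr (by rw [h])
  · exact wrap_neg_eq_neg_or_eq _

lemma sinc_phi_pudqInv (x : Fin 4 → ℝ) : _root_.sinc (phi (pudqInv x)) = _root_.sinc (phi x) := by
  rcases phi_pudqInv_eq_neg_or_eq x with h | h <;> rw [h, sinc_eq_real_sinc]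
  exact Real.sinc_neg _

theorem log_inv_eq_neg_log_general (x : Fin 4 → ℝ) :
    Log1 (pudqInv x) = -Log1 x := by
  funext i
  simp only [Log1, sinc_phi_pudqInv, Pi.neg_apply]
  fin_cases i <;> simp [pudqInv]

theorem log_inv_eq_neg_log (x : Fin 4 → ℝ) (hx : x 0 ^ 2 + x 1 ^ 2 = 1) :
    Log1 (pudqInv x) = -Log1 x :=
  log_inv_eq_neg_log_general x
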